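/- arXiv:math/9912252 — 2 statements merged into one kernel-verified Lean document; each statement's English description precedes it below -/
import Mathlib

section
/- Let f, h ≥ 1 with h odd, 1 ≤ a ≤ f with gcd(a,f) = 1, and let Δ be the discriminant of a quadratic number field with b = Δ/gcd(f,Δ) odd. Then ∑_{n ≥ 1, Δ | lcm(n,f), a ≡ 1 mod gcd(f,n)} μ(n)/w(n) = μ(|b|)·A(a,f,h) / ∏_{p | b} (w(p) − 1), where A(a,f,h) = ∏_{p | gcd(a−1,f)} (1 − 1/w(p)) · ∏_{p ∤ f} (1 − 1/w(p)). -/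
/-!
For squarefree `k` the weight satisfies `w(k) * gcd(k, h) = k * φ(k / gcd(k, f))`. Hence `μ/w` is
multiplicative, and it is absolutely summable because `k * φ(k) ≥ k^(3/2) / √2` for squarefree `k`.
No odd square divides `Δ`, so `|b|` is squarefree and coprime to `f`, and `Δ ∣ lcm(n, f)` says
exactly `|b| ∣ n`. Writing `n = |b| * m` splits off `μ(|b|)/w(|b|)` and leaves a multiplicative
function of `m` supported on squarefree numbers, whose Euler factors are `1` or `1 - 1/w(p)`.
The infinite product in `A` is the Euler product of `μ/w` restricted to `m` coprime to `f`;
comparing the two Euler products as limits avoids inverting local factors, which may vanish.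
-/

open ArithmeticFunction
open scoped ArithmeticFunction.Moebius

namespace ArithmeticFunction

variable {R : Type*}

def restrict [Zero R] (g : ArithmeticFunction R) (P : ℕ → Prop) [DecidablePred P] :
    ArithmeticFunction R :=
  ⟨fun n => if P n then g n else 0, by split_ifs <;> simp⟩

theorem restrict_apply [Zero R] (g : ArithmeticFunction R) (P : ℕ → Prop) [DecidablePred P]
    (n : ℕ) : g.restrict P n = if P n then g n else 0 := rfl

theorem IsMultiplicative.restrict [MonoidWithZero R] {g : ArithmeticFunction R}
    (hg : g.IsMultiplicative) {P : ℕ → Prop} [DecidablePred P] (h1 : P 1)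
    (hP : ∀ {m n : ℕ}, m.Coprime n → (P (m * n) ↔ P m ∧ P n)) :
    (g.restrict P).IsMultiplicative := by
  refine ⟨by simp [restrict_apply, h1, hg.map_one], fun {m n} hmn => ?_⟩
  simp only [restrict_apply, hP hmn, hg.map_mul_of_coprime hmn]
  by_cases hm : P m <;> by_cases hn : P n <;> simp [hm, hn]

theorem IsMultiplicative.hasProd_one_add_of_squarefree [NormedCommRing R] [CompleteSpace R]
    {g : ArithmeticFunction R} (hg : g.IsMultiplicative)
    (hsq : ∀ n, ¬ Squarefree n → g n = 0) (hsum : Summable (‖g ·‖)) :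
    HasProd (fun p : Nat.Primes => 1 + g p) (∑' n, g n) := by
  convert hg.eulerProduct_hasProd hsum using 2 with p
  rw [tsum_eq_sum (s := Finset.range 2) fun e he => hsq _ ?_]
  · simp [Finset.sum_range_succ, hg.map_one]
  · rw [Finset.mem_range, not_lt] at he
    rw [Nat.squarefree_pow_iff p.2.ne_one (by omega)]
    omega

end ArithmeticFunction

theorem hasProd_ite_mem_primeFactors {R : Type*} [CommMonoid R] [TopologicalSpace R] (n : ℕ)
    (u : ℕ → R) :
    HasProd (fun p : Nat.Primes => if (p : ℕ) ∈ n.primeFactors then u p else 1)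
      (∏ p ∈ n.primeFactors, u p) := by
  have hfin : HasProd (fun p : ℕ => if p ∈ n.primeFactors then u p else 1)
      (∏ p ∈ n.primeFactors, u p) := by
    convert hasProd_prod_of_ne_finset_one (L := .unconditional ℕ)
      fun p (hp : p ∉ n.primeFactors) => if_neg hp using 1
    exact Finset.prod_congr rfl fun p hp => (if_pos hp).symm
  exact (Subtype.coe_injective.hasProd_iff fun p hp =>
    if_neg fun hmem => hp ⟨⟨p, Nat.prime_of_mem_primeFactors hmem⟩, rfl⟩).mpr hfin

namespace MoebiusWeightSum

def weight (f h k : ℕ) : ℕ := k * Nat.totient (Nat.lcm k f) / (Nat.gcd k h * Nat.totient f)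

variable {f h : ℕ}

theorem lcm_eq_div_gcd_mul (k f : ℕ) : Nat.lcm k f = k / Nat.gcd k f * f := by
  rw [Nat.lcm, mul_comm k f, Nat.mul_div_assoc f (Nat.gcd_dvd_left k f), mul_comm]

theorem weight_mul_gcd (hf : 0 < f) {k : ℕ} (hk : Squarefree k) :
    weight f h k * Nat.gcd k h = k * Nat.totient (k / Nat.gcd k f) := by
  have hφ : Nat.totient (Nat.lcm k f) = Nat.totient (k / Nat.gcd k f) * Nat.totient f := by
    rw [lcm_eq_div_gcd_mul, Nat.totient_mul (Nat.coprime_div_gcd_of_squarefree hk hf.ne')]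
  rw [weight, hφ, ← mul_assoc, Nat.mul_div_mul_right _ _ (Nat.totient_pos.mpr hf)]
  exact Nat.div_mul_cancel ((Nat.gcd_dvd_left k h).mul_right _)

theorem weight_one (hf : 0 < f) : weight f h 1 = 1 := by
  simpa using weight_mul_gcd (h := h) hf squarefree_one

theorem weight_pos (hf : 0 < f) {k : ℕ} (hk : Squarefree k) : 0 < weight f h k := by
  have hk0 : 0 < k := Nat.pos_of_ne_zero hk.ne_zero
  have hquot : 0 < k / Nat.gcd k f :=
    Nat.div_pos (Nat.gcd_le_left f hk0) (Nat.gcd_pos_of_pos_left f hk0)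
  have hprod : 0 < weight f h k * Nat.gcd k h :=
    weight_mul_gcd hf hk ▸ Nat.mul_pos hk0 (Nat.totient_pos.mpr hquot)
  exact Nat.pos_of_mul_pos_right hprod

theorem weight_mul (hf : 0 < f) (hh : 0 < h) {m n : ℕ} (hm : Squarefree m) (hn : Squarefree n)
    (hmn : Nat.Coprime m n) : weight f h (m * n) = weight f h m * weight f h n := by
  have hgcd : ∀ c, Nat.gcd (m * n) c = Nat.gcd m c * Nat.gcd n c := fun c => by
    rw [Nat.gcd_comm, Nat.Coprime.gcd_mul c hmn, Nat.gcd_comm c, Nat.gcd_comm c]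
  have hquot : m * n / Nat.gcd (m * n) f = m / Nat.gcd m f * (n / Nat.gcd n f) := by
    rw [hgcd, Nat.div_mul_div_comm (Nat.gcd_dvd_left m f) (Nat.gcd_dvd_left n f)]
  have hquot_coprime : Nat.Coprime (m / Nat.gcd m f) (n / Nat.gcd n f) :=
    (hmn.coprime_dvd_left (Nat.div_dvd_of_dvd (Nat.gcd_dvd_left m f))).coprime_dvd_right
      (Nat.div_dvd_of_dvd (Nat.gcd_dvd_left n f))
  have hpos : 0 < Nat.gcd m h * Nat.gcd n h :=
    Nat.mul_pos (Nat.gcd_pos_of_pos_right m hh) (Nat.gcd_pos_of_pos_right n hh)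
  refine Nat.eq_of_mul_eq_mul_right hpos ?_
  calc weight f h (m * n) * (Nat.gcd m h * Nat.gcd n h)
      = m * n * Nat.totient (m * n / Nat.gcd (m * n) f) := by
        rw [← hgcd, weight_mul_gcd hf (Nat.squarefree_mul_iff.mpr ⟨hmn, hm, hn⟩)]
    _ = (m * Nat.totient (m / Nat.gcd m f)) * (n * Nat.totient (n / Nat.gcd n f)) := by
        rw [hquot, Nat.totient_mul hquot_coprime]; ring
    _ = weight f h m * weight f h n * (Nat.gcd m h * Nat.gcd n h) := by
        rw [← weight_mul_gcd hf hm, ← weight_mul_gcd hf hn]; ring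

theorem two_le_weight (hf : 0 < f) {p : ℕ} (hp : p.Prime) (hpf : ¬ p ∣ f) (hp2 : p ≠ 2) :
    2 ≤ weight f h p := by
  have hprime := weight_mul_gcd (h := h) hf hp.prime.squarefree
  rw [Nat.Coprime.gcd_eq_one ((Nat.Prime.coprime_iff_not_dvd hp).mpr hpf), Nat.div_one,
    Nat.totient_prime hp] at hprime
  have hle : p * (p - 1) ≤ weight f h p * p :=
    hprime ▸ Nat.mul_le_mul_left _ (Nat.gcd_le_left h hp.pos)
  have hp1 : p - 1 ≤ weight f h p := Nat.le_of_mul_le_mul_right (mul_comm p _ ▸ hle) hp.pos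
  have hp3 : 2 < p := hp.two_le.lt_of_ne' hp2
  omega

theorem mul_totient_le_weight_mul (hf : 0 < f) (hh : 0 < h) {k : ℕ} (hk : Squarefree k) :
    k * Nat.totient k ≤ weight f h k * (h * f) := by
  have hsplit : Nat.totient k = Nat.totient (k / Nat.gcd k f) * Nat.totient (Nat.gcd k f) := by
    conv_lhs => rw [← Nat.div_mul_cancel (Nat.gcd_dvd_left k f)]
    exact Nat.totient_mul
      ((Nat.coprime_div_gcd_of_squarefree hk hf.ne').coprime_dvd_right (Nat.gcd_dvd_right k f))
  calc k * Nat.totient k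
      = weight f h k * Nat.gcd k h * Nat.totient (Nat.gcd k f) := by
        rw [weight_mul_gcd hf hk, hsplit, mul_assoc]
    _ ≤ weight f h k * (h * f) := by
        rw [mul_assoc]
        exact Nat.mul_le_mul_left _ (Nat.mul_le_mul (Nat.gcd_le_right k hh)
          ((Nat.totient_le _).trans (Nat.gcd_le_right k hf)))

theorem le_two_mul_totient_sq {n : ℕ} (hn : Squarefree n) : n ≤ 2 * Nat.totient n ^ 2 := by
  have hφ : Nat.totient n = ∏ p ∈ n.primeFactors, (p - 1) := by
    have := Nat.totient_mul_prod_primeFactors n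
    rw [Nat.prod_primeFactors_of_squarefree hn] at this
    exact Nat.eq_of_mul_eq_mul_right (Nat.pos_of_ne_zero hn.ne_zero) (this.trans (mul_comm _ _))
  calc n = ∏ p ∈ n.primeFactors, p := (Nat.prod_primeFactors_of_squarefree hn).symm
    _ ≤ ∏ p ∈ n.primeFactors, ((if p = 2 then 2 else 1) * (p - 1) ^ 2) := by
        refine Finset.prod_le_prod' fun p hp => ?_
        have hp2 := (Nat.prime_of_mem_primeFactors hp).two_le
        split_ifs with h2
        · subst h2; norm_num
        · obtain ⟨q, rfl⟩ : ∃ q, p = q + 3 := ⟨p - 3, by omega⟩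
          rw [one_mul, show q + 3 - 1 = q + 2 by omega]
          nlinarith
    _ ≤ 2 * Nat.totient n ^ 2 := by
        rw [Finset.prod_mul_distrib, Finset.prod_ite_eq', Finset.prod_pow, hφ]
        split_ifs <;> omega

noncomputable def moebiusDivWeight (f h : ℕ) : ArithmeticFunction ℝ :=
  ⟨fun n => μ n / weight f h n, by simp⟩

theorem moebiusDivWeight_apply (n : ℕ) : moebiusDivWeight f h n = μ n / weight f h n := rfl

theorem moebiusDivWeight_eq_zero {n : ℕ} (hn : ¬ Squarefree n) : moebiusDivWeight f h n = 0 := by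
  simp [moebiusDivWeight_apply, moebius_eq_zero_of_not_squarefree hn]

theorem isMultiplicative_moebiusDivWeight (hf : 0 < f) (hh : 0 < h) :
    (moebiusDivWeight f h).IsMultiplicative := by
  refine ⟨by simp [moebiusDivWeight_apply, weight_one hf], fun {m n} hmn => ?_⟩
  by_cases hsq : Squarefree (m * n)
  · obtain ⟨-, hm, hn⟩ := Nat.squarefree_mul_iff.mp hsq
    simp only [moebiusDivWeight_apply, isMultiplicative_moebius.map_mul_of_coprime hmn,
      weight_mul hf hh hm hn hmn]
    push_cast
    exact mul_div_mul_comm _ _ _ _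
  · rw [moebiusDivWeight_eq_zero hsq]
    rcases not_and_or.mp (mt (Nat.squarefree_mul_iff.mpr ⟨hmn, ·⟩) hsq) with hm | hn
    · rw [moebiusDivWeight_eq_zero hm, zero_mul]
    · rw [moebiusDivWeight_eq_zero hn, mul_zero]

theorem norm_moebiusDivWeight_le (hf : 0 < f) (hh : 0 < h) (n : ℕ) :
    ‖moebiusDivWeight f h n‖ ≤ 2 * h * f * (1 / (n : ℝ) ^ (3 / 2 : ℝ)) := by
  by_cases hn : Squarefree n
  · have hn0 : (0 : ℝ) < n := by exact_mod_cast Nat.pos_of_ne_zero hn.ne_zero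
    have hw : (0 : ℝ) < weight f h n := by exact_mod_cast weight_pos hf hn
    have hcube : n ^ 3 ≤ (2 * h * f * weight f h n) ^ 2 :=
      calc n ^ 3 = n ^ 2 * n := by ring
        _ ≤ n ^ 2 * (2 * Nat.totient n ^ 2) := Nat.mul_le_mul_left _ (le_two_mul_totient_sq hn)
        _ = 2 * (n * Nat.totient n) ^ 2 := by ring
        _ ≤ 4 * (weight f h n * (h * f)) ^ 2 :=
          Nat.mul_le_mul (by norm_num) (Nat.pow_le_pow_left (mul_totient_le_weight_mul hf hh hn) 2)
        _ = (2 * h * f * weight f h n) ^ 2 := by ring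
    have hrpow : (n : ℝ) ^ (3 / 2 : ℝ) ≤ 2 * h * f * weight f h n := by
      refine le_of_pow_le_pow_left₀ two_ne_zero (by positivity) ?_
      rw [← Real.rpow_mul_natCast hn0.le]
      norm_num
      exact_mod_cast hcube
    rw [moebiusDivWeight_apply, norm_div, Real.norm_eq_abs, ← Int.cast_abs,
      abs_moebius_eq_one_of_squarefree hn, Real.norm_natCast, mul_one_div,
      div_le_div_iff₀ hw (by positivity)]
    simpa using hrpow
  · rw [moebiusDivWeight_eq_zero hn, norm_zero]
    positivity

theorem summable_norm_moebiusDivWeight (hf : 0 < f) (hh : 0 < h) :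
    Summable (‖moebiusDivWeight f h ·‖) :=
  .of_nonneg_of_le (fun _ => norm_nonneg _) (norm_moebiusDivWeight_le hf hh)
    ((Real.summable_one_div_nat_rpow.mpr (by norm_num)).mul_left _)

theorem moebiusDivWeight_mul (hf : 0 < f) (hh : 0 < h) (m n : ℕ) :
    moebiusDivWeight f h (m * n) =
      if Nat.Coprime m n then moebiusDivWeight f h m * moebiusDivWeight f h n else 0 := by
  split_ifs with hmn
  · exact (isMultiplicative_moebiusDivWeight hf hh).map_mul_of_coprime hmn
  · exact moebiusDivWeight_eq_zero fun hsq => hmn (Nat.squarefree_mul_iff.mp hsq).1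

theorem moebiusDivWeight_eq_div (hf : 0 < f) (hh : 0 < h) {B : ℕ} (hB : Squarefree B)
    (hBodd : Odd B) (hBf : Nat.Coprime B f) :
    moebiusDivWeight f h B = μ B * (∏ p ∈ B.primeFactors, (1 - 1 / (weight f h p : ℝ))) /
      ∏ p ∈ B.primeFactors, ((weight f h p : ℝ) - 1) := by
  have hμ : (μ B : ℝ) = ∏ p ∈ B.primeFactors, (μ p : ℝ) := by
    simpa using ((isMultiplicative_moebius.intCast (R := ℝ)).prod_primeFactors hB).symm
  rw [← (isMultiplicative_moebiusDivWeight hf hh).prod_primeFactors hB, hμ,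
    ← Finset.prod_mul_distrib, ← Finset.prod_div_distrib]
  refine Finset.prod_congr rfl fun p hp => ?_
  have hpp := Nat.prime_of_mem_primeFactors hp
  have hpB := Nat.dvd_of_mem_primeFactors hp
  have hw : (2 : ℝ) ≤ weight f h p := by
    exact_mod_cast two_le_weight hf hpp (fun hpf => hpp.one_lt.ne'
      (Nat.eq_one_of_dvd_coprimes hBf hpB hpf)) (hBodd.ne_two_of_dvd_nat hpB)
  rw [moebiusDivWeight_apply]
  field_simp [show (weight f h p : ℝ) - 1 ≠ 0 by linarith]

noncomputable def restrictedMoebius (f h c e : ℕ) : ArithmeticFunction ℝ :=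
  (moebiusDivWeight f h).restrict fun m => Nat.Coprime c m ∧ Nat.gcd f m ∣ e

theorem restrictedMoebius_apply (c e n : ℕ) : restrictedMoebius f h c e n =
    if Nat.Coprime c n ∧ Nat.gcd f n ∣ e then moebiusDivWeight f h n else 0 := rfl

theorem isMultiplicative_restrictedMoebius (hf : 0 < f) (hh : 0 < h) (c e : ℕ) :
    (restrictedMoebius f h c e).IsMultiplicative := by
  refine (isMultiplicative_moebiusDivWeight hf hh).restrict (by simp) fun {m n} hmn => ?_
  have hcop : Nat.Coprime (Nat.gcd f m) (Nat.gcd f n) :=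
    (hmn.coprime_dvd_left (Nat.gcd_dvd_right f m)).coprime_dvd_right (Nat.gcd_dvd_right f n)
  rw [Nat.coprime_mul_iff_right, Nat.Coprime.gcd_mul f hmn]
  exact ⟨fun ⟨⟨hm, hn⟩, hdvd⟩ => ⟨⟨hm, (dvd_mul_right _ _).trans hdvd⟩,
      ⟨hn, (dvd_mul_left _ _).trans hdvd⟩⟩,
    fun ⟨⟨hm, hdm⟩, ⟨hn, hdn⟩⟩ => ⟨⟨hm, hn⟩, hcop.mul_dvd_of_dvd_of_dvd hdm hdn⟩⟩

theorem gcd_dvd_iff_of_prime {p : ℕ} (hp : p.Prime) (f e : ℕ) :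
    Nat.gcd f p ∣ e ↔ (p ∣ f → p ∣ e) := by
  by_cases hpf : p ∣ f
  · simp [Nat.gcd_eq_right hpf, hpf]
  · simp [Nat.Coprime.gcd_eq_one ((hp.coprime_iff_not_dvd.mpr hpf).symm), hpf]

theorem hasProd_restrictedMoebius (hf : 0 < f) (hh : 0 < h) (c e : ℕ) :
    HasProd (fun p : Nat.Primes =>
        if (p : ℕ) ∣ c ∨ ((p : ℕ) ∣ f ∧ ¬ (p : ℕ) ∣ e) then 1 else 1 - 1 / (weight f h p : ℝ))
      (∑' n, restrictedMoebius f h c e n) := by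
  have hsq (n : ℕ) (hn : ¬ Squarefree n) : restrictedMoebius f h c e n = 0 := by
    simp [restrictedMoebius_apply, moebiusDivWeight_eq_zero hn]
  have hsum : Summable (‖restrictedMoebius f h c e ·‖) :=
    .of_nonneg_of_le (fun _ => norm_nonneg _)
      (fun n => by rw [restrictedMoebius_apply]; split_ifs <;> simp)
      (summable_norm_moebiusDivWeight hf hh)
  refine ((isMultiplicative_restrictedMoebius hf hh c e).hasProd_one_add_of_squarefree hsq
    hsum).congr_fun fun p => ?_
  have hcop : Nat.Coprime c p ↔ ¬ (p : ℕ) ∣ c := Nat.coprime_comm.trans p.2.coprime_iff_not_dvd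
  simp only [restrictedMoebius_apply, moebiusDivWeight_apply, moebius_apply_prime p.2, hcop,
    gcd_dvd_iff_of_prime p.2]
  by_cases hpc : (p : ℕ) ∣ c <;> by_cases hpf : (p : ℕ) ∣ f <;> by_cases hpe : (p : ℕ) ∣ e <;>
    simp [hpc, hpf, hpe, sub_eq_add_neg, neg_div]

theorem tsum_restrictedMoebius_mul_prod (hf : 0 < f) (hh : 0 < h) {B : ℕ} (e : ℕ) (hB : B ≠ 0)
    (hBf : Nat.Coprime B f) :
    (∑' n, restrictedMoebius f h B e n) * ∏ p ∈ B.primeFactors, (1 - 1 / (weight f h p : ℝ)) =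
      (∏ p ∈ (Nat.gcd e f).primeFactors, (1 - 1 / (weight f h p : ℝ))) *
        ∏' p : Nat.Primes, (if (p : ℕ) ∣ f then 1 else 1 - 1 / (weight f h p : ℝ)) := by
  -- with `c = f` and `e = 0` the restriction is to `m` coprime to `f`
  have hcoprime := hasProd_restrictedMoebius hf hh f 0
  simp only [dvd_zero, not_true_eq_false, and_false, or_false] at hcoprime
  rw [hcoprime.tprod_eq]
  refine ((hasProd_restrictedMoebius hf hh B e).mul (hasProd_ite_mem_primeFactors B _)).unique ?_
  convert (hasProd_ite_mem_primeFactors (Nat.gcd e f) _).mul hcoprime using 1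
  funext p
  have hpBf : (p : ℕ) ∣ B → ¬ (p : ℕ) ∣ f := fun hpB hpf =>
    p.2.one_lt.ne' (Nat.eq_one_of_dvd_coprimes hBf hpB hpf)
  simp only [Nat.mem_primeFactors_of_ne_zero hB, Nat.mem_primeFactors_of_ne_zero
    (Nat.gcd_ne_zero_right hf.ne'), Nat.dvd_gcd_iff, p.2, true_and]
  by_cases hpB : (p : ℕ) ∣ B <;> by_cases hpf : (p : ℕ) ∣ f <;> by_cases hpe : (p : ℕ) ∣ e <;>
    simp_all

theorem tsum_ite_dvd_moebiusDivWeight (hf : 0 < f) (hh : 0 < h) {B : ℕ} (e : ℕ) (hB : B ≠ 0)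
    (hBf : Nat.Coprime B f) :
    ∑' n, (if 1 ≤ n ∧ B ∣ n ∧ Nat.gcd f n ∣ e then moebiusDivWeight f h n else 0) =
      moebiusDivWeight f h B * ∑' m, restrictedMoebius f h B e m := by
  rw [← tsum_mul_left, ← (mul_right_injective₀ hB).tsum_eq]
  · refine tsum_congr fun m => ?_
    rcases Nat.eq_zero_or_pos m with rfl | hm
    · simp
    rw [restrictedMoebius_apply, Nat.Coprime.gcd_mul_left_cancel_right m hBf,
      moebiusDivWeight_mul hf hh]
    by_cases hBm : Nat.Coprime B m <;> by_cases hdvd : Nat.gcd f m ∣ e <;>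
      simp [hBm, hdvd, Nat.one_le_iff_ne_zero, hB, hm.ne']
  · intro n hn
    rw [Function.mem_support, ne_eq, ite_eq_right_iff, Classical.not_imp] at hn
    exact ⟨n / B, Nat.mul_div_cancel' hn.1.2.1⟩

theorem isUnit_of_odd_of_mul_self_dvd {d Δ x : ℤ} (hd : Squarefree d) (hΔ : Δ = d ∨ Δ = 4 * d)
    (hx : Odd x) (hxΔ : x * x ∣ Δ) : IsUnit x := by
  refine hd x ?_
  rcases hΔ with rfl | rfl
  · exact hxΔ
  · have hcop : IsCoprime (x * x) (2 ^ 2) :=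
      (Int.isCoprime_two_right.mpr (hx.mul hx)).pow_right
    exact hcop.dvd_of_dvd_mul_left (by simpa using hxΔ)

theorem div_gcd_mul_gcd (Δ : ℤ) (f : ℕ) : Δ / Int.gcd f Δ * Int.gcd f Δ = Δ :=
  Int.ediv_mul_cancel (Int.gcd_dvd_right _ _)

section DivGcd

variable {Δ : ℤ} {f : ℕ}

theorem isUnit_of_dvd_div_gcd (hΔ : ∀ x : ℤ, Odd x → x * x ∣ Δ → IsUnit x)
    (hb : Odd (Δ / Int.gcd f Δ)) {x : ℤ} (hx : x ∣ Δ / Int.gcd f Δ)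
    (hxΔ : x * x ∣ Δ) : IsUnit x := by
  obtain ⟨k, hk⟩ := hx
  exact hΔ x (Int.odd_mul.mp (hk ▸ hb)).1 hxΔ

theorem squarefree_natAbs_div_gcd (hΔ : ∀ x : ℤ, Odd x → x * x ∣ Δ → IsUnit x)
    (hb : Odd (Δ / Int.gcd f Δ)) : Squarefree (Δ / Int.gcd f Δ).natAbs :=
  Int.squarefree_natAbs.mpr fun _ hx => isUnit_of_dvd_div_gcd hΔ hb (dvd_of_mul_right_dvd hx)
    (hx.trans ⟨_, (div_gcd_mul_gcd Δ f).symm⟩)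

theorem isCoprime_div_gcd (hΔ : ∀ x : ℤ, Odd x → x * x ∣ Δ → IsUnit x)
    (hb : Odd (Δ / Int.gcd f Δ)) : IsCoprime (Δ / Int.gcd f Δ) f := by
  set b := Δ / Int.gcd f Δ
  have hxb := Int.gcd_dvd_left b f
  have hxG : (Int.gcd b f : ℤ) ∣ Int.gcd f Δ :=
    Int.natCast_dvd_natCast.mpr (Int.dvd_gcd (Int.gcd_dvd_right b f)
      (hxb.trans ⟨_, (div_gcd_mul_gcd Δ f).symm⟩))
  have hunit := isUnit_of_dvd_div_gcd hΔ hb hxb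
    ((mul_dvd_mul hxb hxG).trans (div_gcd_mul_gcd Δ f).dvd)
  exact Int.isCoprime_iff_gcd_eq_one.mpr (by simpa [Int.isUnit_iff] using hunit)

theorem dvd_lcm_iff_natAbs_div_gcd_dvd (hΔ : ∀ x : ℤ, Odd x → x * x ∣ Δ → IsUnit x)
    (hb : Odd (Δ / Int.gcd f Δ)) (n : ℕ) :
    Δ ∣ (Nat.lcm n f : ℤ) ↔ (Δ / Int.gcd f Δ).natAbs ∣ n := by
  have hcop := isCoprime_div_gcd hΔ hb
  have hlcm_dvd : (Nat.lcm n f : ℤ) ∣ n * f := by exact_mod_cast Nat.lcm_dvd_mul n f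
  have hn_dvd : (n : ℤ) ∣ Nat.lcm n f := by exact_mod_cast Nat.dvd_lcm_left n f
  have hf_dvd : (f : ℤ) ∣ Nat.lcm n f := by exact_mod_cast Nat.dvd_lcm_right n f
  rw [← Int.natCast_dvd_natCast, Int.natAbs_dvd]
  conv_lhs => rw [← div_gcd_mul_gcd Δ f]
  exact ⟨fun hdvd => hcop.dvd_of_dvd_mul_right ((dvd_of_mul_right_dvd hdvd).trans hlcm_dvd),
    fun hdvd => (hcop.of_isCoprime_of_dvd_right (Int.gcd_dvd_left _ _)).mul_dvd
      (hdvd.trans hn_dvd) ((Int.gcd_dvd_left _ _).trans hf_dvd)⟩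

end DivGcd

end MoebiusWeightSum

open MoebiusWeightSum

open ArithmeticFunction in
theorem S_eq_of_b_odd_general (f h : ℕ) (hf : 1 ≤ f) (hh : 1 ≤ h)
    (a : ℕ) (ha1 : 1 ≤ a)
    (w : ℕ → ℕ)
    (hw : ∀ k, w k = k * Nat.totient (Nat.lcm k f) / (Nat.gcd k h * Nat.totient f))
    (d : ℤ) (hd : Squarefree d)
    (Δ : ℤ) (hΔ : Δ = if d % 4 = 1 then d else 4 * d)
    (b : ℤ) (hb : b = Δ / (Int.gcd (f : ℤ) Δ : ℤ)) (hbodd : Odd b)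
    (S : ℕ → ℝ)
    (hS : ∀ n, S n = if 1 ≤ n ∧ Δ ∣ (Nat.lcm n f : ℤ) ∧ a % Nat.gcd f n = 1 % Nat.gcd f n
      then (ArithmeticFunction.moebius n : ℝ) / (w n : ℝ) else 0)
    (A : ℝ)
    (hA : A = (∏ p ∈ (Nat.gcd (a - 1) f).primeFactors, (1 - 1 / (w p : ℝ))) *
        ∏' p : Nat.Primes, (if (p : ℕ) ∣ f then 1 else 1 - 1 / (w (p : ℕ) : ℝ))) :
    ∑' n : ℕ, S n =
      (ArithmeticFunction.moebius b.natAbs : ℝ) * A /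
        ∏ p ∈ b.natAbs.primeFactors, ((w p : ℝ) - 1) := by
  obtain rfl : w = weight f h := funext hw
  have hΔsq : ∀ x : ℤ, Odd x → x * x ∣ Δ → IsUnit x := fun _ =>
    isUnit_of_odd_of_mul_self_dvd hd (hΔ ▸ ite_eq_or_eq _ _ _)
  subst hb
  set b := Δ / (Int.gcd (f : ℤ) Δ : ℤ)
  have hB0 : b.natAbs ≠ 0 := fun h0 => by simp [Int.natAbs_eq_zero.mp h0] at hbodd
  have hBf : Nat.Coprime b.natAbs f := by
    simpa [Int.isCoprime_iff_nat_coprime] using isCoprime_div_gcd hΔsq hbodd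
  have hsum : ∑' n, S n = moebiusDivWeight f h b.natAbs *
      ∑' m, restrictedMoebius f h b.natAbs (a - 1) m := by
    rw [← tsum_ite_dvd_moebiusDivWeight hf hh (a - 1) hB0 hBf]
    have hmod (k : ℕ) : a % k = 1 % k ↔ k ∣ a - 1 := eq_comm.trans (Nat.modEq_iff_dvd' ha1)
    simp only [hS, dvd_lcm_iff_natAbs_div_gcd_dvd hΔsq hbodd, hmod]
    rfl
  rw [hsum, hA, ← tsum_restrictedMoebius_mul_prod hf hh (a - 1) hB0 hBf,
    moebiusDivWeight_eq_div hf hh (squarefree_natAbs_div_gcd hΔsq hbodd)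
      (Int.natAbs_odd.mpr hbodd) hBf]
  ring

open ArithmeticFunction in
theorem S_eq_of_b_odd (f h : ℕ) (hf : 1 ≤ f) (hh : 1 ≤ h) (hhodd : Odd h)
    (a : ℕ) (ha1 : 1 ≤ a) (haf : a ≤ f) (hco : Nat.Coprime a f)
    (w : ℕ → ℕ)
    (hw : ∀ k, w k = k * Nat.totient (Nat.lcm k f) / (Nat.gcd k h * Nat.totient f))
    (d : ℤ) (hd : Squarefree d) (hd0 : d ≠ 0) (hd1 : d ≠ 1)
    (Δ : ℤ) (hΔ : Δ = if d % 4 = 1 then d else 4 * d)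
    (b : ℤ) (hb : b = Δ / (Int.gcd (f : ℤ) Δ : ℤ)) (hbodd : Odd b)
    (S : ℕ → ℝ)
    (hS : ∀ n, S n = if 1 ≤ n ∧ Δ ∣ (Nat.lcm n f : ℤ) ∧ a % Nat.gcd f n = 1 % Nat.gcd f n
      then (ArithmeticFunction.moebius n : ℝ) / (w n : ℝ) else 0)
    (A : ℝ)
    (hA : A = (∏ p ∈ (Nat.gcd (a - 1) f).primeFactors, (1 - 1 / (w p : ℝ))) *
        ∏' p : Nat.Primes, (if (p : ℕ) ∣ f then 1 else 1 - 1 / (w (p : ℕ) : ℝ))) :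
    ∑' n : ℕ, S n =
      (ArithmeticFunction.moebius b.natAbs : ℝ) * A /
        ∏ p ∈ b.natAbs.primeFactors, ((w p : ℝ) - 1) :=
  S_eq_of_b_odd_general f h hf hh a ha1 w hw d hd Δ hΔ b hb hbodd S hS A hA
end

section
/- Under the same hypotheses, the sum S₂(b) = ∑_{n ≥ 1, n even, Δ | lcm(n,f), a ≡ 1 mod gcd(f,n)} μ(n)/w(n) satisfies S₂(b) = −S(b), where S(b) is the corresponding sum over all n. -/
/-!
For odd `m`, passing from `m` to `2m` keeps the three summation conditions (a discriminant is
`0` or `1` mod `4`, and `a` is odd when `f` is even), flips the sign of `μ`, and doubles `w`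
(since `h` is odd and `φ (lcm 2 n) = φ n`); for even `m`, `μ (2m) = 0`. So the summand satisfies
`S (2m) = -S m / 2` for odd `m` and `S (2m) = 0` otherwise: the even part of the series is `-1/2`
times its odd part, while the whole series is `1/2` times it.
-/

open scoped Nat ArithmeticFunction.Moebius

namespace Nat

theorem lcm_two_of_odd {n : ℕ} (hn : Odd n) : lcm 2 n = 2 * n :=
  (coprime_two_left.mpr hn).lcm_eq_mul

theorem lcm_two_mul_of_odd {m : ℕ} (hm : Odd m) (f : ℕ) : lcm (2 * m) f = lcm 2 (lcm m f) := by
  rw [← lcm_two_of_odd hm, lcm_assoc]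

theorem totient_lcm_two (n : ℕ) : φ (lcm 2 n) = φ n := by
  rcases n.even_or_odd with hn | hn
  · rw [lcm_eq_right hn.two_dvd]
  · rw [lcm_two_of_odd hn, totient_mul (coprime_two_left.mpr hn), totient_two, one_mul]

theorem modEq_one_gcd_two {a f : ℕ} (hco : a.Coprime f) : a ≡ 1 [MOD f.gcd 2] := by
  rcases (dvd_prime prime_two).mp (gcd_dvd_right f 2) with h | h
  · rw [h]
    exact modEq_one
  · rw [h]
    exact odd_iff.mp (coprime_two_right.mp (hco.coprime_dvd_right (h ▸ gcd_dvd_left f 2)))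

theorem modEq_one_gcd_two_mul_iff {a f m : ℕ} (hco : a.Coprime f) (hm : Odd m) :
    a ≡ 1 [MOD f.gcd (2 * m)] ↔ a ≡ 1 [MOD f.gcd m] := by
  have h2m : Coprime 2 m := coprime_two_left.mpr hm
  rw [h2m.gcd_mul f, ← modEq_and_modEq_iff_modEq_mul (h2m.gcd_both f f)]
  exact and_iff_right (modEq_one_gcd_two hco)

end Nat

namespace ArithmeticFunction

theorem moebius_two_mul_of_odd {m : ℕ} (hm : Odd m) : μ (2 * m) = -μ m := by
  rw [isMultiplicative_moebius.map_mul_of_coprime (Nat.coprime_two_left.mpr hm),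
    moebius_apply_prime Nat.prime_two, neg_one_mul]

theorem moebius_two_mul_of_even {m : ℕ} (hm : Even m) : μ (2 * m) = 0 :=
  moebius_eq_zero_of_not_squarefree fun hsq =>
    Nat.prime_two.not_isUnit (hsq 2 (mul_dvd_mul_left 2 hm.two_dvd))

end ArithmeticFunction

theorem Int.dvd_natCast_lcm_two_iff {Δ : ℤ} (hΔ : Δ % 4 = 0 ∨ Δ % 4 = 1) (n : ℕ) :
    Δ ∣ (Nat.lcm 2 n : ℤ) ↔ Δ ∣ (n : ℤ) := by
  rcases n.even_or_odd with hn | hn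
  · rw [Nat.lcm_eq_right hn.two_dvd]
  rw [Nat.lcm_two_of_odd hn, Nat.cast_mul, Nat.cast_two]
  refine ⟨fun h => ?_, fun h => h.mul_left 2⟩
  rcases hΔ with hΔ | hΔ
  · obtain ⟨k, hk⟩ := hn
    obtain ⟨j, hj⟩ := (Int.dvd_of_emod_eq_zero hΔ).trans h
    omega
  · exact (Int.isCoprime_two_right.mpr (Int.odd_iff.mpr (by omega))).dvd_of_dvd_mul_left h

def weight (f h k : ℕ) : ℕ := k * φ (Nat.lcm k f) / (Nat.gcd k h * φ f)

theorem weight_two_mul {f h m : ℕ} (hh : Odd h) (hm : Odd m) :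
    weight f h (2 * m) = 2 * weight f h m := by
  have hdvd : Nat.gcd m h * φ f ∣ m * φ (Nat.lcm m f) :=
    mul_dvd_mul (Nat.gcd_dvd_left m h) (Nat.totient_dvd_of_dvd (Nat.dvd_lcm_right m f))
  rw [weight, weight, Nat.lcm_two_mul_of_odd hm, Nat.totient_lcm_two,
    (Nat.coprime_two_left.mpr hh).gcd_mul_left_cancel, mul_assoc, Nat.mul_div_assoc 2 hdvd]

theorem summand_two_mul {f h a : ℕ} (hh : Odd h) (hco : a.Coprime f) {Δ : ℤ}
    (hΔ : Δ % 4 = 0 ∨ Δ % 4 = 1) {S : ℕ → ℝ}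
    (hS : ∀ n, S n = if 1 ≤ n ∧ Δ ∣ (Nat.lcm n f : ℤ) ∧ a ≡ 1 [MOD f.gcd n]
      then (μ n : ℝ) / weight f h n else 0) (m : ℕ) :
    S (2 * m) = if Odd m then -S m / 2 else 0 := by
  rcases m.even_or_odd with hm | hm
  · rw [if_neg (Nat.not_odd_iff_even.mpr hm), hS, ArithmeticFunction.moebius_two_mul_of_even hm]
    simp
  have hcond : (1 ≤ 2 * m ∧ Δ ∣ (Nat.lcm (2 * m) f : ℤ) ∧ a ≡ 1 [MOD f.gcd (2 * m)]) ↔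
      (1 ≤ m ∧ Δ ∣ (Nat.lcm m f : ℤ) ∧ a ≡ 1 [MOD f.gcd m]) := by
    rw [Nat.lcm_two_mul_of_odd hm, Int.dvd_natCast_lcm_two_iff hΔ,
      Nat.modEq_one_gcd_two_mul_iff hco hm]
    have hm0 := hm.pos
    exact and_congr (iff_of_true (by omega) hm0) Iff.rfl
  rw [if_pos hm, hS, hS, if_congr hcond rfl rfl, weight_two_mul hh hm,
    ArithmeticFunction.moebius_two_mul_of_odd hm]
  split_ifs <;> push_cast <;> ring

theorem tsum_even_eq_neg_tsum {g : ℕ → ℝ}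
    (hg : ∀ m, g (2 * m) = if Odd m then -g m / 2 else 0) :
    ∑' n, (if 2 ∣ n then g n else 0) = -∑' n, g n := by
  set E : ℕ → ℝ := fun n => if 2 ∣ n then g n else 0
  set O : ℕ → ℝ := fun n => if Odd n then g n else 0
  have hinj : Function.Injective (2 * · : ℕ → ℕ) := mul_right_injective₀ two_ne_zero
  have hsupp : ∀ n ∉ Set.range (2 * · : ℕ → ℕ), E n = 0 := fun n hn =>
    if_neg fun ⟨k, hk⟩ => hn ⟨k, hk.symm⟩
  have hE : E ∘ (2 * ·) = fun m => -(1 / 2) * O m := by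
    ext m
    simp only [Function.comp, E, O, dvd_mul_right, if_true, hg]
    split_ifs <;> ring
  have hEO : ∑' n, E n = -(1 / 2) * ∑' n, O n := by
    rw [← hinj.tsum_eq (Function.support_subset_iff'.mpr hsupp), ← tsum_mul_left]
    exact tsum_congr (congrFun hE)
  have hsplit : g = O + E := by
    ext n
    rcases n.even_or_odd with hn | hn
    · simp [O, E, hn.two_dvd, Nat.not_odd_iff_even.mpr hn]
    · simp [O, E, hn, Nat.odd_iff.mp hn, Nat.dvd_iff_mod_eq_zero]
  by_cases hO : Summable O
  · have hEs : Summable E := (hinj.summable_iff hsupp).mp (hE ▸ hO.mul_left _)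
    rw [hEO, hsplit, Pi.add_def, hO.tsum_add hEs, hEO]
    ring
  · -- Then `g` is not summable either, and all three `tsum`s are the junk value `0`.
    have hg : ¬Summable g := fun hs =>
      hO ((hs.indicator {n | Odd n}).congr fun n => by simp [O, Set.indicator_apply])
    rw [hEO, tsum_eq_zero_of_not_summable hO, tsum_eq_zero_of_not_summable hg]
    simp

open ArithmeticFunction in
theorem S_two_eq_neg_S_general (f h : ℕ) (hhodd : Odd h)
    (a : ℕ) (hco : Nat.Coprime a f)
    (w : ℕ → ℕ)
    (hw : ∀ k, w k = k * Nat.totient (Nat.lcm k f) / (Nat.gcd k h * Nat.totient f))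
    (d : ℤ)
    (Δ : ℤ) (hΔ : Δ = if d % 4 = 1 then d else 4 * d)
    (S S₂ : ℕ → ℝ)
    (hS : ∀ n, S n = if 1 ≤ n ∧ Δ ∣ (Nat.lcm n f : ℤ) ∧ a % Nat.gcd f n = 1 % Nat.gcd f n
      then (ArithmeticFunction.moebius n : ℝ) / (w n : ℝ) else 0)
    (hS₂ : ∀ n, S₂ n = if 2 ∣ n then S n else 0) :
    ∑' n : ℕ, S₂ n = - ∑' n : ℕ, S n := by
  have hΔ4 : Δ % 4 = 0 ∨ Δ % 4 = 1 := by split_ifs at hΔ <;> omega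
  have hS' : ∀ n, S n = if 1 ≤ n ∧ Δ ∣ (Nat.lcm n f : ℤ) ∧ a ≡ 1 [MOD f.gcd n]
      then (μ n : ℝ) / weight f h n else 0 := fun n => by
    rw [hS, hw]
    rfl
  rw [tsum_congr hS₂]
  exact tsum_even_eq_neg_tsum (summand_two_mul hhodd hco hΔ4 hS')

open ArithmeticFunction in
theorem S_two_eq_neg_S (f h : ℕ) (hf : 1 ≤ f) (hh : 1 ≤ h) (hhodd : Odd h)
    (a : ℕ) (ha1 : 1 ≤ a) (haf : a ≤ f) (hco : Nat.Coprime a f)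
    (w : ℕ → ℕ)
    (hw : ∀ k, w k = k * Nat.totient (Nat.lcm k f) / (Nat.gcd k h * Nat.totient f))
    (d : ℤ) (hd : Squarefree d) (hd0 : d ≠ 0) (hd1 : d ≠ 1)
    (Δ : ℤ) (hΔ : Δ = if d % 4 = 1 then d else 4 * d)
    (b : ℤ) (hb : b = Δ / (Int.gcd (f : ℤ) Δ : ℤ))
    (S S₂ : ℕ → ℝ)
    (hS : ∀ n, S n = if 1 ≤ n ∧ Δ ∣ (Nat.lcm n f : ℤ) ∧ a % Nat.gcd f n = 1 % Nat.gcd f n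
      then (ArithmeticFunction.moebius n : ℝ) / (w n : ℝ) else 0)
    (hS₂ : ∀ n, S₂ n = if 2 ∣ n then S n else 0) :
    ∑' n : ℕ, S₂ n = - ∑' n : ℕ, S n :=
  S_two_eq_neg_S_general f h hhodd a hco w hw d Δ hΔ S S₂ hS hS₂
end
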